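/- For the characteristic-function image f = h·χ_{B(0,R)} on Ω = (−2R,2R)², defined as a limit of smooth radial approximants uₙ ∈ S, the total variation satisfies ∫_Ω |∇f| dx dy = 2πRh (the perimeter of the disk times the jump height), whereas the Weingarten regularizer satisfies ∫_Ω |W_f| dx dy = 4πR, independent of the height h. -/

import Mathlib

/-!
For a profile `ψ` of the class `S`, concavity on `(0, R)`, convexity on `(R, 2R)` and flatness
near both ends force `ψ' ≤ 0`. Hence `r |ψ'| = -r ψ'`, and integration by parts gives
`∫ r |ψ'| = R₁ h + ∫_{R₁}^{R₂} ψ ∈ [R₁ h, R₂ h]`, which tends to `R h`.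

For the Weingarten map, write `G = ψ' / √(1 + ψ'²)`: the principal curvatures are `κ₁ = G'` and
`κ₂ = G / r`, so `r |κ₁| ≤ r |W| ≤ r |κ₁| + |G|`. Since `κ₁` has the sign of `ψ''`, integrating
`r G'` by parts on `(0, R)` and `(R, 2R)` turns both bounds into `-2R G(R)` plus integrals of `G`.
As `ψ'(R) → -∞` we have `G(R) → -1`, while the integrals of `G` tend to `0`, so both bounds tend
to `2R`, whatever `h` is.
-/

open Filter MeasureTheory intervalIntegral Set Topology

theorem integral_eq_integral_of_eqOn_zero {F : ℝ → ℝ} {u c d v : ℝ} (huc : u ≤ c) (hdv : d ≤ v)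
    (hu : EqOn F 0 (Ioo u c)) (hv : EqOn F 0 (Ioo d v)) (hF : IntervalIntegrable F volume c d) :
    ∫ x in u..v, F x = ∫ x in c..d, F x := by
  have hFu : IntervalIntegrable F volume u c :=
    (intervalIntegrable_congr_uIoo (uIoo_of_le huc ▸ hu)).2 intervalIntegrable_const
  have hFv : IntervalIntegrable F volume d v :=
    (intervalIntegrable_congr_uIoo (uIoo_of_le hdv ▸ hv)).2 intervalIntegrable_const
  rw [← integral_add_adjacent_intervals hFu (hF.trans hFv),
    ← integral_add_adjacent_intervals hF hFv,
    integral_congr_Ioo_of_le huc hu, integral_congr_Ioo_of_le hdv hv]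
  simp

theorem integral_mul_abs_deriv_of_nonpos {g g' : ℝ → ℝ} {u v : ℝ} (huv : u ≤ v)
    (hg : ∀ x ∈ Icc u v, HasDerivAt g (g' x) x) (hg' : ContinuousOn g' (Icc u v))
    (hneg : ∀ x ∈ Ioo u v, g' x ≤ 0) :
    ∫ x in u..v, x * |g' x| = u * g u - v * g v + ∫ x in u..v, g x := by
  have hparts := integral_mul_deriv_eq_deriv_mul (u := id) (u' := fun _ => 1)
    (fun x _ => hasDerivAt_id x) (fun x hx => hg x (uIcc_of_le huv ▸ hx))
    intervalIntegrable_const (hg'.intervalIntegrable_of_Icc huv)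
  rw [integral_congr_Ioo_of_le huv (g := fun x => -(x * g' x))
    fun x hx => by simp only [abs_of_nonpos (hneg x hx), mul_neg], intervalIntegral.integral_neg]
  simp only [id, one_mul] at hparts
  linarith

theorem integral_mul_abs_deriv_of_nonneg {g g' : ℝ → ℝ} {u v : ℝ} (huv : u ≤ v)
    (hg : ∀ x ∈ Icc u v, HasDerivAt g (g' x) x) (hg' : ContinuousOn g' (Icc u v))
    (hpos : ∀ x ∈ Ioo u v, 0 ≤ g' x) :
    ∫ x in u..v, x * |g' x| = v * g v - u * g u - ∫ x in u..v, g x := by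
  have := integral_mul_abs_deriv_of_nonpos huv (fun x hx => (hg x hx).neg) hg'.neg
    fun x hx => neg_nonpos.2 (hpos x hx)
  simp only [Pi.neg_apply, abs_neg, intervalIntegral.integral_neg] at this
  linarith

theorem hasDerivAt_div_sqrt_one_add_sq (x : ℝ) :
    HasDerivAt (fun t => t / √(1 + t ^ 2)) (1 / (1 + x ^ 2) ^ ((3 : ℝ) / 2)) x := by
  have hpos : 0 < 1 + x ^ 2 := by positivity
  have hsqrt : √(1 + x ^ 2) ≠ 0 := (Real.sqrt_pos.2 hpos).ne'
  have hpow : (1 + x ^ 2) ^ ((3 : ℝ) / 2) = √(1 + x ^ 2) ^ 3 := by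
    rw [← Real.rpow_natCast (√(1 + x ^ 2)) 3, Real.sqrt_eq_rpow, ← Real.rpow_mul hpos.le]
    norm_num
  refine ((hasDerivAt_id x).div (((hasDerivAt_pow 2 x).const_add 1).sqrt hpos.ne') hsqrt
    ).congr_deriv ?_
  rw [hpow]
  field_simp
  rw [Real.sq_sqrt hpos.le]
  simp
  ring

theorem tendsto_div_sqrt_one_add_sq_atBot :
    Tendsto (fun x : ℝ => x / √(1 + x ^ 2)) atBot (𝓝 (-1)) := by
  have hlim : Tendsto (fun x : ℝ => -(1 / √(1 + x⁻¹ ^ 2))) atBot (𝓝 (-1)) := by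
    simpa using (((tendsto_inv_atBot_zero.pow 2).const_add 1).sqrt.inv₀ (by simp)).neg
  refine hlim.congr' ?_
  filter_upwards [eventually_lt_atBot 0] with x hx
  have hpos : 0 < 1 + x ^ 2 := by positivity
  rw [show 1 + x⁻¹ ^ 2 = (1 + x ^ 2) / x ^ 2 by field_simp [hx.ne]; ring, Real.sqrt_div hpos.le,
    Real.sqrt_sq_eq_abs, abs_of_neg hx]
  field_simp

theorem Real.abs_le_sqrt_sq_add_sq (p q : ℝ) : |p| ≤ √(p ^ 2 + q ^ 2) := by
  simpa [Complex.norm_eq_sqrt_sq_add_sq] using Complex.abs_re_le_norm ⟨p, q⟩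

theorem Real.sqrt_sq_add_sq_le (p q : ℝ) : √(p ^ 2 + q ^ 2) ≤ |p| + |q| := by
  simpa [Complex.norm_eq_sqrt_sq_add_sq] using Complex.norm_le_abs_re_add_abs_im ⟨p, q⟩

noncomputable section Curvatures

variable (ψ : ℝ → ℝ)

/- For `u(x) = ψ(|x|)`, `meridianCurvature ψ r` and `parallelCurvature ψ r` are the principal
curvatures of the graph of `u` at radius `r`, so `weingartenNorm` is the Frobenius norm of its
Weingarten map. `slopeSine` is the sine of the inclination of the meridian. -/

def slopeSine (r : ℝ) : ℝ := deriv ψ r / √(1 + deriv ψ r ^ 2)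

def meridianCurvature (r : ℝ) : ℝ := deriv (deriv ψ) r / (1 + deriv ψ r ^ 2) ^ ((3 : ℝ) / 2)

def parallelCurvature (r : ℝ) : ℝ := deriv ψ r / (r * √(1 + deriv ψ r ^ 2))

def weingartenNorm (r : ℝ) : ℝ := √(meridianCurvature ψ r ^ 2 + parallelCurvature ψ r ^ 2)

theorem mul_abs_meridianCurvature_le_mul_weingartenNorm {r : ℝ} (hr : 0 ≤ r) :
    r * |meridianCurvature ψ r| ≤ r * weingartenNorm ψ r :=
  mul_le_mul_of_nonneg_left (Real.abs_le_sqrt_sq_add_sq _ _) hr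

theorem mul_weingartenNorm_le {r : ℝ} (hr : 0 < r) :
    r * weingartenNorm ψ r ≤ r * |meridianCurvature ψ r| + |slopeSine ψ r| := by
  have hparallel : r * parallelCurvature ψ r = slopeSine ψ r := by
    rw [parallelCurvature, slopeSine]
    field_simp
  calc r * weingartenNorm ψ r ≤ r * (|meridianCurvature ψ r| + |parallelCurvature ψ r|) :=
        mul_le_mul_of_nonneg_left (Real.sqrt_sq_add_sq_le _ _) hr.le
    _ = r * |meridianCurvature ψ r| + |slopeSine ψ r| := by
        rw [← hparallel, abs_mul, abs_of_pos hr, mul_add]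

end Curvatures

/-- The radial profile `ψ` of a member `u(x) = ψ(|x|)` of the class `S`, with `R₁ = a`, `R₂ = b`. -/
structure IsSmoothStep (R h a b : ℝ) (ψ : ℝ → ℝ) : Prop where
  contDiffOn : ContDiffOn ℝ 2 ψ (Icc 0 (2 * R))
  pos : 0 < a
  lt_center : a < R
  center_lt : R < b
  lt_two_mul : b < 2 * R
  eq_height : ∀ r ∈ Icc 0 a, ψ r = h
  eq_zero : ∀ r ∈ Icc b (2 * R), ψ r = 0
  concave : ∀ r ∈ Ioo 0 R, deriv (deriv ψ) r ≤ 0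
  convex : ∀ r ∈ Ioo R (2 * R), 0 ≤ deriv (deriv ψ) r

namespace IsSmoothStep

variable {R h a b r : ℝ} {ψ : ℝ → ℝ}

theorem contDiffOn_Ioo (hψ : IsSmoothStep R h a b ψ) : ContDiffOn ℝ 2 ψ (Ioo 0 (2 * R)) :=
  hψ.contDiffOn.mono Ioo_subset_Icc_self

theorem contDiffOn_deriv (hψ : IsSmoothStep R h a b ψ) :
    ContDiffOn ℝ 1 (deriv ψ) (Ioo 0 (2 * R)) :=
  hψ.contDiffOn_Ioo.deriv_of_isOpen isOpen_Ioo (by norm_num)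

theorem hasDerivAt (hψ : IsSmoothStep R h a b ψ) (hr : r ∈ Ioo 0 (2 * R)) :
    HasDerivAt ψ (deriv ψ r) r :=
  ((hψ.contDiffOn_Ioo.differentiableOn two_ne_zero).differentiableAt
    (isOpen_Ioo.mem_nhds hr)).hasDerivAt

theorem hasDerivAt_deriv (hψ : IsSmoothStep R h a b ψ) (hr : r ∈ Ioo 0 (2 * R)) :
    HasDerivAt (deriv ψ) (deriv (deriv ψ) r) r :=
  ((hψ.contDiffOn_deriv.differentiableOn one_ne_zero).differentiableAt
    (isOpen_Ioo.mem_nhds hr)).hasDerivAt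

theorem continuousOn_deriv (hψ : IsSmoothStep R h a b ψ) :
    ContinuousOn (deriv ψ) (Ioo 0 (2 * R)) :=
  hψ.contDiffOn_deriv.continuousOn

theorem continuousOn_deriv_deriv (hψ : IsSmoothStep R h a b ψ) :
    ContinuousOn (deriv (deriv ψ)) (Ioo 0 (2 * R)) :=
  hψ.contDiffOn_deriv.continuousOn_deriv_of_isOpen isOpen_Ioo le_rfl

theorem deriv_eventuallyEq_zero (hψ : IsSmoothStep R h a b ψ)
    (hr : r ∈ Ioo 0 a ∪ Ioo b (2 * R)) : deriv ψ =ᶠ[𝓝 r] 0 := by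
  have hconst : ψ =ᶠ[𝓝 r] fun _ => ψ r := by
    rcases hr with hr | hr
    · filter_upwards [Ioo_mem_nhds hr.1 hr.2] with x hx
      rw [hψ.eq_height x (Ioo_subset_Icc_self hx), hψ.eq_height r (Ioo_subset_Icc_self hr)]
    · filter_upwards [Ioo_mem_nhds hr.1 hr.2] with x hx
      rw [hψ.eq_zero x (Ioo_subset_Icc_self hx), hψ.eq_zero r (Ioo_subset_Icc_self hr)]
  filter_upwards [hconst.eventuallyEq_nhds] with x hx
  rw [hx.deriv_eq, deriv_const, Pi.zero_apply]

theorem deriv_eq_zero (hψ : IsSmoothStep R h a b ψ) (hr : r ∈ Ioo 0 a ∪ Ioo b (2 * R)) :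
    deriv ψ r = 0 :=
  (hψ.deriv_eventuallyEq_zero hr).eq_of_nhds

theorem deriv_deriv_eq_zero (hψ : IsSmoothStep R h a b ψ)
    (hr : r ∈ Ioo 0 a ∪ Ioo b (2 * R)) : deriv (deriv ψ) r = 0 := by
  rw [(hψ.deriv_eventuallyEq_zero hr).deriv_eq, Pi.zero_def, deriv_const]

theorem antitoneOn_deriv (hψ : IsSmoothStep R h a b ψ) : AntitoneOn (deriv ψ) (Ioc 0 R) := by
  have hsub : Ioc 0 R ⊆ Ioo 0 (2 * R) := Ioc_subset_Ioo_right (by linarith [hψ.pos, hψ.lt_center])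
  refine antitoneOn_of_deriv_nonpos (convex_Ioc 0 R) (hψ.continuousOn_deriv.mono hsub) ?_ ?_ <;>
    rw [interior_Ioc]
  · exact (hψ.contDiffOn_deriv.differentiableOn one_ne_zero).mono (Ioo_subset_Ioc_self.trans hsub)
  · exact hψ.concave

theorem monotoneOn_deriv (hψ : IsSmoothStep R h a b ψ) :
    MonotoneOn (deriv ψ) (Ico R (2 * R)) := by
  have hsub : Ico R (2 * R) ⊆ Ioo 0 (2 * R) :=
    Ico_subset_Ioo_left (by linarith [hψ.pos, hψ.lt_center])
  refine monotoneOn_of_deriv_nonneg (convex_Ico R (2 * R)) (hψ.continuousOn_deriv.mono hsub)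
    ?_ ?_ <;> rw [interior_Ico]
  · exact (hψ.contDiffOn_deriv.differentiableOn one_ne_zero).mono (Ioo_subset_Ico_self.trans hsub)
  · exact hψ.convex

theorem deriv_nonpos (hψ : IsSmoothStep R h a b ψ) (hr : r ∈ Ioo 0 (2 * R)) :
    deriv ψ r ≤ 0 := by
  have ha := hψ.pos
  have hb := hψ.lt_two_mul
  rcases le_total r R with hrR | hRr
  · have hc : min r (a / 2) ∈ Ioo 0 a := ⟨lt_min hr.1 (by linarith), by
      linarith [min_le_right r (a / 2)]⟩
    calc deriv ψ r ≤ deriv ψ (min r (a / 2)) :=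
          hψ.antitoneOn_deriv ⟨hc.1, by linarith [hc.2, hψ.lt_center]⟩ ⟨hr.1, hrR⟩ (min_le_left _ _)
      _ = 0 := hψ.deriv_eq_zero (Or.inl hc)
  · have hd : max r ((b + 2 * R) / 2) ∈ Ioo b (2 * R) := ⟨by
      linarith [le_max_right r ((b + 2 * R) / 2)], max_lt hr.2 (by linarith)⟩
    calc deriv ψ r ≤ deriv ψ (max r ((b + 2 * R) / 2)) :=
          hψ.monotoneOn_deriv ⟨hRr, hr.2⟩ ⟨by linarith [hd.1, hψ.center_lt], hd.2⟩ (le_max_left _ _)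
      _ = 0 := hψ.deriv_eq_zero (Or.inr hd)

theorem antitoneOn (hψ : IsSmoothStep R h a b ψ) : AntitoneOn ψ (Icc a b) := by
  have hsub : Icc a b ⊆ Ioo 0 (2 * R) := Icc_subset_Ioo hψ.pos hψ.lt_two_mul
  refine antitoneOn_of_deriv_nonpos (convex_Icc a b)
    (hψ.contDiffOn.continuousOn.mono (hsub.trans Ioo_subset_Icc_self)) ?_ ?_ <;> rw [interior_Icc]
  · exact fun x hx =>
      (hψ.hasDerivAt (hsub (Ioo_subset_Icc_self hx))).differentiableAt.differentiableWithinAt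
  · exact fun x hx => hψ.deriv_nonpos (hsub (Ioo_subset_Icc_self hx))

theorem integral_mul_abs_deriv_eq (hψ : IsSmoothStep R h a b ψ) :
    ∫ r in (0 : ℝ)..(2 * R), r * |deriv ψ r| = a * h + ∫ r in a..b, ψ r := by
  have hab : a ≤ b := (hψ.lt_center.trans hψ.center_lt).le
  have hsub : Icc a b ⊆ Ioo 0 (2 * R) := Icc_subset_Ioo hψ.pos hψ.lt_two_mul
  have hzero : EqOn (fun r => r * |deriv ψ r|) 0 (Ioo 0 a ∪ Ioo b (2 * R)) := fun r hr => by
    simp [hψ.deriv_eq_zero hr]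
  rw [integral_eq_integral_of_eqOn_zero hψ.pos.le hψ.lt_two_mul.le
      (fun r hr => hzero (Or.inl hr)) (fun r hr => hzero (Or.inr hr))
      ((continuousOn_id.mul (hψ.continuousOn_deriv.mono hsub).abs).intervalIntegrable_of_Icc hab),
    integral_mul_abs_deriv_of_nonpos hab (fun r hr => hψ.hasDerivAt (hsub hr))
      (hψ.continuousOn_deriv.mono hsub)
      (fun r hr => hψ.deriv_nonpos (hsub (Ioo_subset_Icc_self hr))),
    hψ.eq_height a ⟨hψ.pos.le, le_rfl⟩, hψ.eq_zero b ⟨le_rfl, hψ.lt_two_mul.le⟩]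
  ring

theorem integral_mul_abs_deriv_mem_Icc (hψ : IsSmoothStep R h a b ψ) :
    ∫ r in (0 : ℝ)..(2 * R), r * |deriv ψ r| ∈ Icc (a * h) (b * h) := by
  have hab : a ≤ b := (hψ.lt_center.trans hψ.center_lt).le
  have hbounds : ∀ r ∈ Icc a b, 0 ≤ ψ r ∧ ψ r ≤ h := fun r hr => by
    constructor
    · rw [← hψ.eq_zero b ⟨le_rfl, hψ.lt_two_mul.le⟩]
      exact hψ.antitoneOn hr (right_mem_Icc.2 hab) hr.2
    · rw [← hψ.eq_height a ⟨hψ.pos.le, le_rfl⟩]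
      exact hψ.antitoneOn (left_mem_Icc.2 hab) hr hr.1
  have hint : IntervalIntegrable ψ volume a b :=
    (hψ.contDiffOn.continuousOn.mono (Icc_subset_Icc hψ.pos.le hψ.lt_two_mul.le)
      ).intervalIntegrable_of_Icc hab
  have hlower : 0 ≤ ∫ r in a..b, ψ r := integral_nonneg hab fun r hr => (hbounds r hr).1
  have hupper : ∫ r in a..b, ψ r ≤ (b - a) * h := by
    simpa using integral_mono_on hab hint intervalIntegrable_const fun r hr => (hbounds r hr).2
  rw [hψ.integral_mul_abs_deriv_eq]
  constructor <;> nlinarith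

theorem hasDerivAt_slopeSine (hψ : IsSmoothStep R h a b ψ) (hr : r ∈ Ioo 0 (2 * R)) :
    HasDerivAt (slopeSine ψ) (meridianCurvature ψ r) r :=
  ((hasDerivAt_div_sqrt_one_add_sq (deriv ψ r)).comp r (hψ.hasDerivAt_deriv hr)).congr_deriv
    (one_div_mul_eq_div _ _)

theorem continuousOn_slopeSine (hψ : IsSmoothStep R h a b ψ) :
    ContinuousOn (slopeSine ψ) (Ioo 0 (2 * R)) :=
  fun _ hr => (hψ.hasDerivAt_slopeSine hr).continuousAt.continuousWithinAt

theorem continuousOn_meridianCurvature (hψ : IsSmoothStep R h a b ψ) :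
    ContinuousOn (meridianCurvature ψ) (Ioo 0 (2 * R)) :=
  hψ.continuousOn_deriv_deriv.div
    ((continuousOn_const.add (hψ.continuousOn_deriv.pow 2)).rpow_const
      fun _ _ => Or.inr (by norm_num))
    fun _ _ => by positivity

theorem continuousOn_mul_weingartenNorm (hψ : IsSmoothStep R h a b ψ) :
    ContinuousOn (fun r => r * weingartenNorm ψ r) (Ioo 0 (2 * R)) := by
  refine continuousOn_id.mul (((hψ.continuousOn_meridianCurvature.pow 2).add ?_).sqrt)
  exact (hψ.continuousOn_deriv.div (continuousOn_id.mul
    ((continuousOn_const.add (hψ.continuousOn_deriv.pow 2)).sqrt))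
    fun r hr => mul_ne_zero hr.1.ne' (Real.sqrt_pos.2 (by dsimp; positivity)).ne').pow 2

theorem slopeSine_eq_zero (hψ : IsSmoothStep R h a b ψ) (hr : r ∈ Ioo 0 a ∪ Ioo b (2 * R)) :
    slopeSine ψ r = 0 := by
  simp [slopeSine, hψ.deriv_eq_zero hr]

theorem weingartenNorm_eq_zero (hψ : IsSmoothStep R h a b ψ) (hr : r ∈ Ioo 0 a ∪ Ioo b (2 * R)) :
    weingartenNorm ψ r = 0 := by
  simp [weingartenNorm, meridianCurvature, parallelCurvature, hψ.deriv_eq_zero hr,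
    hψ.deriv_deriv_eq_zero hr]

theorem slopeSine_nonpos (hψ : IsSmoothStep R h a b ψ) (hr : r ∈ Ioo 0 (2 * R)) :
    slopeSine ψ r ≤ 0 :=
  div_nonpos_of_nonpos_of_nonneg (hψ.deriv_nonpos hr) (Real.sqrt_nonneg _)

theorem meridianCurvature_nonpos (hψ : IsSmoothStep R h a b ψ) (hr : r ∈ Ioo 0 R) :
    meridianCurvature ψ r ≤ 0 :=
  div_nonpos_of_nonpos_of_nonneg (hψ.concave r hr) (by positivity)

theorem meridianCurvature_nonneg (hψ : IsSmoothStep R h a b ψ) (hr : r ∈ Ioo R (2 * R)) :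
    0 ≤ meridianCurvature ψ r :=
  div_nonneg (hψ.convex r hr) (by positivity)

variable {c d : ℝ}

theorem integral_mul_abs_meridianCurvature (hψ : IsSmoothStep R h a b ψ) (hc : c ∈ Ioo 0 a)
    (hd : d ∈ Ioo b (2 * R)) :
    ∫ r in c..d, r * |meridianCurvature ψ r| =
      -(2 * R * slopeSine ψ R) + (∫ r in c..R, slopeSine ψ r) - ∫ r in R..d, slopeSine ψ r := by
  have hcR : c ≤ R := (hc.2.trans hψ.lt_center).le
  have hRd : R ≤ d := (hψ.center_lt.trans hd.1).le
  have hleft : Icc c R ⊆ Ioo 0 (2 * R) := Icc_subset_Ioo hc.1 (by linarith [hψ.pos, hψ.lt_center])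
  have hright : Icc R d ⊆ Ioo 0 (2 * R) := Icc_subset_Ioo (hc.1.trans_le hcR) hd.2
  have hcont : ContinuousOn (fun r => r * |meridianCurvature ψ r|) (Ioo 0 (2 * R)) :=
    continuousOn_id.mul hψ.continuousOn_meridianCurvature.abs
  rw [← integral_add_adjacent_intervals ((hcont.mono hleft).intervalIntegrable_of_Icc hcR)
      ((hcont.mono hright).intervalIntegrable_of_Icc hRd),
    integral_mul_abs_deriv_of_nonpos hcR (fun x hx => hψ.hasDerivAt_slopeSine (hleft hx))
      (hψ.continuousOn_meridianCurvature.mono hleft)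
      (fun x hx => hψ.meridianCurvature_nonpos ⟨hc.1.trans hx.1, hx.2⟩),
    integral_mul_abs_deriv_of_nonneg hRd (fun x hx => hψ.hasDerivAt_slopeSine (hright hx))
      (hψ.continuousOn_meridianCurvature.mono hright)
      (fun x hx => hψ.meridianCurvature_nonneg ⟨hx.1, hx.2.trans hd.2⟩),
    hψ.slopeSine_eq_zero (Or.inl hc), hψ.slopeSine_eq_zero (Or.inr hd)]
  ring

theorem integral_abs_slopeSine (hψ : IsSmoothStep R h a b ψ) (hc : c ∈ Ioo 0 a)
    (hd : d ∈ Ioo b (2 * R)) :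
    ∫ r in c..d, |slopeSine ψ r| =
      -((∫ r in c..R, slopeSine ψ r) + ∫ r in R..d, slopeSine ψ r) := by
  have hcR : c ≤ R := (hc.2.trans hψ.lt_center).le
  have hRd : R ≤ d := (hψ.center_lt.trans hd.1).le
  have hsub : Icc c d ⊆ Ioo 0 (2 * R) := Icc_subset_Ioo hc.1 hd.2
  have hint : ∀ {u v}, c ≤ u → v ≤ d → u ≤ v → IntervalIntegrable (slopeSine ψ) volume u v :=
    fun hu hv huv => (hψ.continuousOn_slopeSine.mono
      ((Icc_subset_Icc hu hv).trans hsub)).intervalIntegrable_of_Icc huv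
  rw [integral_add_adjacent_intervals (hint le_rfl hRd hcR) (hint hcR le_rfl hRd),
    integral_congr_Ioo_of_le (hcR.trans hRd) (g := fun r => -slopeSine ψ r)
      fun r hr => abs_of_nonpos (hψ.slopeSine_nonpos (hsub (Ioo_subset_Icc_self hr))),
    intervalIntegral.integral_neg]

theorem integral_slopeSine_eq_left (hψ : IsSmoothStep R h a b ψ) (hc : c ∈ Ioo 0 a) :
    ∫ r in (0 : ℝ)..R, slopeSine ψ r = ∫ r in c..R, slopeSine ψ r :=
  have hcR : c ≤ R := (hc.2.trans hψ.lt_center).le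
  integral_eq_integral_of_eqOn_zero hc.1.le le_rfl
    (fun r hr => hψ.slopeSine_eq_zero (Or.inl ⟨hr.1, hr.2.trans hc.2⟩)) (by simp)
    ((hψ.continuousOn_slopeSine.mono (Icc_subset_Ioo hc.1 (by linarith [hψ.pos, hψ.lt_center]))
      ).intervalIntegrable_of_Icc hcR)

theorem integral_slopeSine_eq_right (hψ : IsSmoothStep R h a b ψ) (hd : d ∈ Ioo b (2 * R)) :
    ∫ r in R..(2 * R), slopeSine ψ r = ∫ r in R..d, slopeSine ψ r :=
  have hRd : R ≤ d := (hψ.center_lt.trans hd.1).le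
  integral_eq_integral_of_eqOn_zero le_rfl hd.2.le (by simp)
    (fun r hr => hψ.slopeSine_eq_zero (Or.inr ⟨hd.1.trans hr.1, hr.2⟩))
    ((hψ.continuousOn_slopeSine.mono (Icc_subset_Ioo (hψ.pos.trans hψ.lt_center) hd.2)
      ).intervalIntegrable_of_Icc hRd)

theorem integral_mul_weingartenNorm_mem_Icc (hψ : IsSmoothStep R h a b ψ) :
    ∫ r in (0 : ℝ)..(2 * R), r * weingartenNorm ψ r ∈
      Icc (-(2 * R * slopeSine ψ R) + (∫ r in (0 : ℝ)..R, slopeSine ψ r)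
          - ∫ r in R..(2 * R), slopeSine ψ r)
        (-(2 * R * slopeSine ψ R) - 2 * ∫ r in R..(2 * R), slopeSine ψ r) := by
  obtain ⟨c, hc⟩ : (Ioo 0 a).Nonempty := nonempty_Ioo.2 hψ.pos
  obtain ⟨d, hd⟩ : (Ioo b (2 * R)).Nonempty := nonempty_Ioo.2 hψ.lt_two_mul
  have hcR : c ≤ R := (hc.2.trans hψ.lt_center).le
  have hRd : R ≤ d := (hψ.center_lt.trans hd.1).le
  have hsub : Icc c d ⊆ Ioo 0 (2 * R) := Icc_subset_Ioo hc.1 hd.2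
  have hintK : IntervalIntegrable (fun r => r * |meridianCurvature ψ r|) volume c d :=
    ((continuousOn_id.mul hψ.continuousOn_meridianCurvature.abs).mono hsub
      ).intervalIntegrable_of_Icc (hcR.trans hRd)
  have hintG : IntervalIntegrable (fun r => |slopeSine ψ r|) volume c d :=
    (hψ.continuousOn_slopeSine.abs.mono hsub).intervalIntegrable_of_Icc (hcR.trans hRd)
  have hintW : IntervalIntegrable (fun r => r * weingartenNorm ψ r) volume c d :=
    (hψ.continuousOn_mul_weingartenNorm.mono hsub).intervalIntegrable_of_Icc (hcR.trans hRd)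
  have hlower := integral_mono_on (hcR.trans hRd) hintK hintW
    fun r hr => mul_abs_meridianCurvature_le_mul_weingartenNorm ψ (hsub hr).1.le
  have hupper := integral_mono_on (hcR.trans hRd) hintW (hintK.add hintG)
    fun r hr => mul_weingartenNorm_le ψ (hsub hr).1
  rw [integral_add hintK hintG, hψ.integral_abs_slopeSine hc hd] at hupper
  rw [integral_eq_integral_of_eqOn_zero hc.1.le hd.2.le
      (fun r hr => by simp [hψ.weingartenNorm_eq_zero (Or.inl ⟨hr.1, hr.2.trans hc.2⟩)])
      (fun r hr => by simp [hψ.weingartenNorm_eq_zero (Or.inr ⟨hd.1.trans hr.1, hr.2⟩)]) hintW,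
    hψ.integral_slopeSine_eq_left hc, hψ.integral_slopeSine_eq_right hd]
  rw [hψ.integral_mul_abs_meridianCurvature hc hd] at hlower hupper
  constructor <;> linarith

end IsSmoothStep

theorem tv_versus_weingarten_general
    (R h : ℝ)
    (φ : ℕ → ℝ → ℝ) (R₁ R₂ : ℕ → ℝ)
    (hclass : ∀ n, ContDiffOn ℝ 2 (φ n) (Set.Icc 0 (2*R)) ∧
      0 < R₁ n ∧ R₁ n < R ∧ R < R₂ n ∧ R₂ n < 2*R ∧
      (∀ r ∈ Set.Icc 0 (R₁ n), φ n r = h) ∧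
      (∀ r ∈ Set.Icc (R₂ n) (2*R), φ n r = 0) ∧
      (∀ r ∈ Set.Ioo 0 R, deriv (deriv (φ n)) r ≤ 0) ∧
      (∀ r ∈ Set.Ioo R (2*R), 0 ≤ deriv (deriv (φ n)) r) ∧
      deriv (φ n) R < -(2*h/R))
    (hR₁lim : Tendsto R₁ atTop (nhds R))
    (hR₂lim : Tendsto R₂ atTop (nhds R))
    (hder : Tendsto (fun n => deriv (φ n) R) atTop atBot)
    (hint1 : Tendsto (fun n => ∫ r in (0:ℝ)..R,
        deriv (φ n) r / Real.sqrt (1 + (deriv (φ n) r)^2)) atTop (nhds 0))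
    (hint2 : Tendsto (fun n => ∫ r in R..(2*R),
        deriv (φ n) r / Real.sqrt (1 + (deriv (φ n) r)^2)) atTop (nhds 0)) :
    Tendsto (fun n => 2 * Real.pi * ∫ r in (0:ℝ)..(2*R), r * |deriv (φ n) r|)
        atTop (nhds (2 * Real.pi * R * h)) ∧
    Tendsto (fun n => 2 * Real.pi * ∫ r in (0:ℝ)..(2*R),
        r * Real.sqrt ((deriv (deriv (φ n)) r / (1 + (deriv (φ n) r)^2) ^ ((3:ℝ)/2))^2
          + (deriv (φ n) r / (r * Real.sqrt (1 + (deriv (φ n) r)^2)))^2))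
        atTop (nhds (4 * Real.pi * R)) := by
  have hstep : ∀ n, IsSmoothStep R h (R₁ n) (R₂ n) (φ n) := fun n => by
    obtain ⟨hψ, ha, haR, hRb, hb, hin, hout, hconc, hconv, -⟩ := hclass n
    exact ⟨hψ, ha, haR, hRb, hb, hin, hout, hconc, hconv⟩
  have hslope : Tendsto (fun n => slopeSine (φ n) R) atTop (𝓝 (-1)) :=
    tendsto_div_sqrt_one_add_sq_atBot.comp hder
  constructor
  · have hTV : Tendsto (fun n => ∫ r in (0:ℝ)..(2*R), r * |deriv (φ n) r|) atTop (𝓝 (R * h)) :=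
      tendsto_of_tendsto_of_tendsto_of_le_of_le (hR₁lim.mul_const h) (hR₂lim.mul_const h)
        (fun n => (hstep n).integral_mul_abs_deriv_mem_Icc.1)
        (fun n => (hstep n).integral_mul_abs_deriv_mem_Icc.2)
    simpa only [mul_assoc] using hTV.const_mul (2 * Real.pi)
  · have hlower := ((hslope.const_mul (2 * R)).neg.add hint1).sub hint2
    have hupper := (hslope.const_mul (2 * R)).neg.sub (hint2.const_mul 2)
    simp only [mul_neg, mul_one, neg_neg, add_zero, sub_zero, mul_zero] at hlower hupper
    have hW := tendsto_of_tendsto_of_tendsto_of_le_of_le hlower hupper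
      (fun n => (hstep n).integral_mul_weingartenNorm_mem_Icc.1)
      (fun n => (hstep n).integral_mul_weingartenNorm_mem_Icc.2)
    rw [show 4 * Real.pi * R = 2 * Real.pi * (2 * R) by ring]
    exact hW.const_mul (2 * Real.pi)

/-- for `f = h·χ_{B(0,R)}` realized as a limit of smooth radial
approximants `uₙ ∈ S` (with `R₁ₙ, R₂ₙ → R`), the total variation
`∫_Ω |∇f| = lim 2π∫₀^{2R} r|uₙ'| dr` equals `2πRh` (perimeter times jump height, scaling
linearly in `h`), whereas the Weingarten regularizer
`∫_Ω |W_f| = lim 2π∫₀^{2R} r|W_{uₙ}| dr` equals `4πR`, independent of `h`. -/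
theorem tv_versus_weingarten
    (R h : ℝ) (hR : 0 < R) (hh : 0 < h)
    (φ : ℕ → ℝ → ℝ) (R₁ R₂ : ℕ → ℝ)
    (hclass : ∀ n, ContDiffOn ℝ 2 (φ n) (Set.Icc 0 (2*R)) ∧
      0 < R₁ n ∧ R₁ n < R ∧ R < R₂ n ∧ R₂ n < 2*R ∧
      (∀ r ∈ Set.Icc 0 (R₁ n), φ n r = h) ∧
      (∀ r ∈ Set.Icc (R₂ n) (2*R), φ n r = 0) ∧
      (∀ r ∈ Set.Ioo 0 R, deriv (deriv (φ n)) r ≤ 0) ∧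
      (∀ r ∈ Set.Ioo R (2*R), 0 ≤ deriv (deriv (φ n)) r) ∧
      deriv (φ n) R < -(2*h/R))
    (hpt : ∀ r ∈ Set.Icc (0:ℝ) (2*R),
      Tendsto (fun n => φ n r) atTop (nhds (if r < R then h else 0)))
    (hR₁lim : Tendsto R₁ atTop (nhds R))
    (hR₂lim : Tendsto R₂ atTop (nhds R))
    (hder : Tendsto (fun n => deriv (φ n) R) atTop atBot)
    (hint1 : Tendsto (fun n => ∫ r in (0:ℝ)..R,
        deriv (φ n) r / Real.sqrt (1 + (deriv (φ n) r)^2)) atTop (nhds 0))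
    (hint2 : Tendsto (fun n => ∫ r in R..(2*R),
        deriv (φ n) r / Real.sqrt (1 + (deriv (φ n) r)^2)) atTop (nhds 0)) :
    Tendsto (fun n => 2 * Real.pi * ∫ r in (0:ℝ)..(2*R), r * |deriv (φ n) r|)
        atTop (nhds (2 * Real.pi * R * h)) ∧
    Tendsto (fun n => 2 * Real.pi * ∫ r in (0:ℝ)..(2*R),
        r * Real.sqrt ((deriv (deriv (φ n)) r / (1 + (deriv (φ n) r)^2) ^ ((3:ℝ)/2))^2
          + (deriv (φ n) r / (r * Real.sqrt (1 + (deriv (φ n) r)^2)))^2))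
        atTop (nhds (4 * Real.pi * R)) :=
  tv_versus_weingarten_general R h φ R₁ R₂ hclass hR₁lim hR₂lim hder hint1 hint2
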